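/- Let γ : ℝ/ℤ → 𝕋 × ℝ be a C¹ embedded essential curve, and let s₀, s₁ ∈ ℝ/ℤ with s₀ ≠ s₁ both achieve the maximal height: p₂(γ(s₀)) = p₂(γ(s₁)) = max_{s} p₂(γ(s)). Then the angle variation along γ between γ(s₀) and γ(s₁) is zero: Var_γ(γ(s₀), γ(s₁)) = 0. -/

import Mathlib

/-!
Hopf's secant argument. The secant `(Γ t - Γ s) / (t - s)`, extended by `Γ'` on the diagonal,
does not vanish on the triangle `s ≤ t ≤ s + 1` because the curve is embedded and essential.
Over this simply connected triangle the tangent angle from `a` to `b` deforms into the angle of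
the secant along two legs, `t ↦ secant (a, t)` followed by `s ↦ secant (s, b)`. If `a` and `b`
are both highest (or both lowest) points, the first leg stays in one closed half-plane and the
second in the other, so each leg turns by at most half a turn, and exactly how much is read off
from whether its horizontal endpoints point left or right.

Comparing a highest with a lowest point over one period shows that the tangent has winding number
zero; hence at every highest point the tangent points the way the curve runs around the annulus
(the sign of `e`). Splitting the period at `S₀` and `S₁` then forces both secants between them to
point that way too, and the two legs from `S₀` to `S₁` cancel.
-/

open Set Filter Function

noncomputable section

/-- Unit vector at angle `θ` (measured in full turns, counterclockwise)
from the vertical vector `χ = (0,1)`. -/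
def angVec (θ : ℝ) : ℝ × ℝ := (-Real.sin (2 * Real.pi * θ), Real.cos (2 * Real.pi * θ))

/-- `θ` is a continuous determination of the (oriented) angle, measured in full
turns from the vertical `(0,1)`, of the path of nonzero vectors `v`. -/
def IsAngleDet (v : ℝ → ℝ × ℝ) (θ : ℝ → ℝ) : Prop :=
  Continuous θ ∧ ∀ t, ∃ r : ℝ, 0 < r ∧ v t = r • angVec (θ t)

/-- A (lifted to `ℝ²`) isotopy of `C¹` diffeomorphisms of the annulus
`𝕋 × ℝ`, starting at the identity, extended to nonnegative times by
`F (t+1) = F t ∘ F 1`.  The field `per` expresses that each `F t` is the lift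
of a map of the annulus. -/
structure Isotopy where
  F : ℝ → ℝ × ℝ → ℝ × ℝ
  init : F 0 = id
  cont : Continuous fun p : ℝ × (ℝ × ℝ) => F p.1 p.2
  smooth : ∀ t, ContDiff ℝ 1 (F t)
  bij : ∀ t, Function.Bijective (F t)
  fderiv_bij : ∀ t x, Function.Bijective (fderiv ℝ (F t) x)
  per : ∀ t x, F t (x + (1, 0)) = F t x + (1, 0)
  ext : ∀ t : ℝ, 0 ≤ t → ∀ x, F (t + 1) x = F t (F 1 x)

/-- Negative-torsion map: at every point, the torsion at finite time 1 of the
vertical vector `χ = (0,1)` is negative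
(`Torsion₁(f,x,χ) = θ 1 - θ 0 < 0` for any continuous determination `θ`). -/
def NegTorsion (J : Isotopy) : Prop :=
  ∀ x : ℝ × ℝ, ∀ θ : ℝ → ℝ,
    IsAngleDet (fun t => fderiv ℝ (J.F t) x ((0 : ℝ), (1 : ℝ))) θ → θ 1 - θ 0 < 0

/-- A lift `Γ : ℝ → ℝ²` of a `C¹` embedded essential curve of the annulus
`𝕋 × ℝ`; the curve is homotopic to `c₁` (if `e = 1`) or to `c₋₁` (if `e = -1`). -/
structure EssC1Curve where
  Γ : ℝ → ℝ × ℝ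
  e : ℝ
  he : e = 1 ∨ e = -1
  smooth : ContDiff ℝ 1 Γ
  tangent_ne : ∀ t, deriv Γ t ≠ 0
  inj : ∀ s t, Γ s = Γ t → ∃ k : ℤ, t = s + (k : ℝ)
  per : ∀ t, Γ (t + 1) = Γ t + (e, 0)

open Real

def IsAngle (v : ℝ × ℝ) (θ : ℝ) : Prop := ∃ r : ℝ, 0 < r ∧ v = r • angVec θ

lemma angVec_add_int (θ : ℝ) (k : ℤ) : angVec (θ + k) = angVec θ := by
  simp only [angVec, show 2 * π * (θ + k) = 2 * π * θ + k * (2 * π) by ring,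
    sin_add_int_mul_two_pi, cos_add_int_mul_two_pi]

lemma angVec_half_sub (θ : ℝ) : angVec (1 / 2 - θ) = ((angVec θ).1, -(angVec θ).2) := by
  simp only [angVec, show 2 * π * (1 / 2 - θ) = π - 2 * π * θ by ring, sin_pi_sub, cos_pi_sub]

lemma equivRealProdCLM_symm_angVec (θ : ℝ) :
    Complex.equivRealProdCLM.symm (angVec θ) = Complex.I * Circle.exp (2 * π * θ) := by
  apply Complex.ext <;>
    simp [angVec, Complex.mul_re, Complex.mul_im, Complex.exp_ofReal_mul_I_re,
      Complex.exp_ofReal_mul_I_im, -Complex.ofReal_mul, -Complex.ofReal_sin, -Complex.ofReal_cos]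

lemma IsAngle.reflect {v : ℝ × ℝ} {θ : ℝ} (h : IsAngle v θ) : IsAngle (v.1, -v.2) (1 / 2 - θ) := by
  obtain ⟨r, hr, rfl⟩ := h
  exact ⟨r, hr, by rw [angVec_half_sub]; simp⟩

lemma IsAngle.sub_mem_range_intCast {v : ℝ × ℝ} {θ θ' : ℝ} (h : IsAngle v θ) (h' : IsAngle v θ') :
    θ' - θ ∈ Set.range ((↑) : ℤ → ℝ) := by
  obtain ⟨r, hr, rfl⟩ := h
  obtain ⟨r', hr', hv⟩ := h'
  have hc := congrArg Complex.equivRealProdCLM.symm hv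
  simp only [map_smul, equivRealProdCLM_symm_angVec, Complex.real_smul] at hc
  have hrr : r = r' := by
    simpa only [norm_mul, Complex.norm_real, Complex.norm_I, Circle.norm_coe, mul_one,
      Real.norm_of_nonneg hr.le, Real.norm_of_nonneg hr'.le] using congrArg norm hc
  subst hrr
  obtain ⟨m, hm⟩ := Circle.exp_eq_exp.1 <| Subtype.ext <|
    mul_left_cancel₀ Complex.I_ne_zero (mul_left_cancel₀ (by exact_mod_cast hr.ne') hc)
  refine ⟨-m, mul_left_cancel₀ two_pi_pos.ne' ?_⟩
  push_cast
  linear_combination hm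

lemma exists_continuous_isAngle {X : Type*} [TopologicalSpace X] [SimplyConnectedSpace X]
    [LocallyPathConnectedSpace X] {f : X → ℝ × ℝ} (hf : Continuous f) (hf₀ : ∀ x, f x ≠ 0) :
    ∃ θ : X → ℝ, Continuous θ ∧ ∀ x, IsAngle (f x) (θ x) := by
  let F : C(X, ℂ) := ⟨fun x => -Complex.I * Complex.equivRealProdCLM.symm (f x), by fun_prop⟩
  have hF : ∀ x, F x ∈ ({0}ᶜ : Set ℂ) := fun x => by
    simpa [F, Complex.I_ne_zero] using hf₀ x
  obtain ⟨x₀⟩ := (inferInstance : Nonempty X)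
  obtain ⟨L, ⟨-, hL⟩, -⟩ := Complex.isCoveringMapOn_exp.existsUnique_continuousMap_lifts F
    (Complex.exp_log (hF x₀)) hF
  refine ⟨fun x => (L x).im / (2 * π), by fun_prop,
    fun x => ⟨Real.exp (L x).re, Real.exp_pos _, ?_⟩⟩
  apply Complex.equivRealProdCLM.symm.injective
  have hx := congrFun hL x
  simp only [Function.comp_apply, ContinuousMap.coe_mk, F] at hx
  rw [map_smul, equivRealProdCLM_symm_angVec, Complex.real_smul,
    mul_div_cancel₀ _ (by positivity : (2 * π) ≠ 0), Circle.coe_exp, Complex.ofReal_exp,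
    mul_left_comm, ← Complex.exp_add, Complex.re_add_im]
  linear_combination (-Complex.I) * hx + Complex.equivRealProdCLM.symm (f x) * Complex.I_sq

lemma sub_eq_sub_of_isAngle {S : Set ℝ} (hS : IsPreconnected S) {v : ℝ → ℝ × ℝ} {θ θ' : ℝ → ℝ}
    (hθ : ContinuousOn θ S) (hθ' : ContinuousOn θ' S) (hv : ∀ t ∈ S, IsAngle (v t) (θ t))
    (hv' : ∀ t ∈ S, IsAngle (v t) (θ' t)) {s t : ℝ} (hs : s ∈ S) (ht : t ∈ S) :
    θ' s - θ s = θ' t - θ t :=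
  hS.constant_of_mapsTo Int.isClosedEmbedding_coe_real.isInducing.isDiscrete_range
    (hθ'.sub hθ) (fun u hu => (hv u hu).sub_mem_range_intCast (hv' u hu)) hs ht

lemma IsAngle.sub_round {v : ℝ × ℝ} {θ : ℝ} (h : IsAngle v θ) : IsAngle v (θ - round θ) := by
  rwa [IsAngle, sub_eq_add_neg, ← Int.cast_neg, angVec_add_int]

lemma IsAngle.cos_nonneg {v : ℝ × ℝ} {θ : ℝ} (h : IsAngle v θ) (hv : 0 ≤ v.2) :
    0 ≤ cos (2 * π * θ) := by
  obtain ⟨r, hr, rfl⟩ := h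
  exact nonneg_of_mul_nonneg_right hv hr

lemma abs_le_quarter_of_cos_nonneg {y : ℝ} (hy : |y| ≤ 1 / 2) (h : 0 ≤ cos (2 * π * y)) :
    |y| ≤ 1 / 4 := by
  rw [← cos_abs, abs_mul, abs_of_pos two_pi_pos] at h
  by_contra! hlt
  have := cos_neg_of_pi_div_two_lt_of_lt (x := 2 * π * |y|) (by nlinarith [pi_pos])
    (by nlinarith [pi_pos])
  linarith

lemma abs_eq_quarter_of_cos_eq_zero {y : ℝ} (hy : |y| ≤ 1 / 2) (h : cos (2 * π * y) = 0) :
    |y| = 1 / 4 := by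
  refine (abs_le_quarter_of_cos_nonneg hy h.ge).antisymm (not_lt.1 fun hlt => ?_)
  rw [← cos_abs, abs_mul, abs_of_pos two_pi_pos] at h
  have := cos_pos_of_mem_Ioo (x := 2 * π * |y|) ⟨by nlinarith [pi_pos, abs_nonneg y],
    by nlinarith [pi_pos]⟩
  linarith

/-- `1` if `v` points to the right and `-1` otherwise; only evaluated at nonzero horizontal `v`. -/
def horizontalSign (v : ℝ × ℝ) : ℝ := if 0 < v.1 then 1 else -1

lemma horizontalSign_eq_one_or (v : ℝ × ℝ) : horizontalSign v = 1 ∨ horizontalSign v = -1 := by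
  unfold horizontalSign
  split_ifs <;> simp

lemma IsAngle.eq_round_sub_horizontalSign {v : ℝ × ℝ} {θ : ℝ} (h : IsAngle v θ) (hv : v.2 = 0) :
    θ = round θ - horizontalSign v / 4 := by
  obtain ⟨r, hr, rfl⟩ := h.sub_round
  have hcos : cos (2 * π * (θ - round θ)) = 0 := by simpa [angVec, hr.ne'] using hv
  rcases (abs_eq (by norm_num)).1 (abs_eq_quarter_of_cos_eq_zero (abs_sub_round θ) hcos)
    with hy | hy
  · rw [hy, show angVec (1 / 4) = (-1, 0) by
      rw [angVec, show 2 * π * (1 / 4) = π / 2 by ring, sin_pi_div_two, cos_pi_div_two]]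
    simp only [horizontalSign, Prod.smul_mk, smul_eq_mul, mul_neg, mul_one, mul_zero,
      Left.neg_pos_iff, hr.not_gt, ↓reduceIte]
    linarith
  · rw [hy, show angVec (-(1 / 4)) = (1, 0) by
      rw [angVec, show 2 * π * -(1 / 4) = -(π / 2) by ring, sin_neg, cos_neg, sin_pi_div_two,
        cos_pi_div_two, neg_neg]]
    simp only [horizontalSign, Prod.smul_mk, smul_eq_mul, mul_one, mul_zero, hr, ↓reduceIte]
    linarith

lemma round_eq_of_isAngle_of_snd_nonneg {S : Set ℝ} (hS : IsPreconnected S) {v : ℝ → ℝ × ℝ}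
    {θ : ℝ → ℝ} (hθ : ContinuousOn θ S) (hv : ∀ t ∈ S, IsAngle (v t) (θ t))
    (hup : ∀ t ∈ S, 0 ≤ (v t).2) {s t : ℝ} (hs : s ∈ S) (ht : t ∈ S) :
    round (θ s) = round (θ t) := by
  wlog hle : round (θ s) ≤ round (θ t) generalizing s t
  · exact (this ht hs (le_of_not_ge hle)).symm
  by_contra hne
  have hlt : (round (θ s) : ℝ) + 1 ≤ round (θ t) := by exact_mod_cast lt_of_le_of_ne hle hne
  have hquarter : ∀ u ∈ S, |θ u - round (θ u)| ≤ 1 / 4 := fun u hu =>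
    abs_le_quarter_of_cos_nonneg (abs_sub_round _) ((hv u hu).sub_round.cos_nonneg (hup u hu))
  obtain ⟨u, hu, hθu⟩ := hS.intermediate_value hs ht hθ
    (show (round (θ s) : ℝ) + 1 / 2 ∈ Icc (θ s) (θ t) from
      ⟨by linarith [(abs_le.1 (hquarter s hs)).2], by linarith [(abs_le.1 (hquarter t ht)).1]⟩)
  have := (hv u hu).cos_nonneg (hup u hu)
  rw [hθu, show 2 * π * (round (θ s) + 1 / 2) = π + round (θ s) * (2 * π) by ring,
    cos_add_int_mul_two_pi, cos_pi] at this
  norm_num at this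

lemma sub_eq_of_isAngle_of_snd_nonneg {S : Set ℝ} (hS : IsPreconnected S) {v : ℝ → ℝ × ℝ}
    {θ : ℝ → ℝ} (hθ : ContinuousOn θ S) (hv : ∀ t ∈ S, IsAngle (v t) (θ t))
    (hup : ∀ t ∈ S, 0 ≤ (v t).2) {a b : ℝ} (ha : a ∈ S) (hb : b ∈ S) (ha₀ : (v a).2 = 0)
    (hb₀ : (v b).2 = 0) :
    θ b - θ a = (horizontalSign (v a) - horizontalSign (v b)) / 4 := by
  have hround := round_eq_of_isAngle_of_snd_nonneg hS hθ hv hup ha hb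
  have hθa := (hv a ha).eq_round_sub_horizontalSign ha₀
  have hθb := (hv b hb).eq_round_sub_horizontalSign hb₀
  rw [hround] at hθa
  linarith

lemma sub_eq_of_isAngle_of_halfPlane {S : Set ℝ} (hS : IsPreconnected S) {v : ℝ → ℝ × ℝ}
    {θ : ℝ → ℝ} (hθ : ContinuousOn θ S) (hv : ∀ t ∈ S, IsAngle (v t) (θ t)) {ε : ℝ}
    (hε : ε = 1 ∨ ε = -1) (hhalf : ∀ t ∈ S, 0 ≤ ε * (v t).2) {a b : ℝ} (ha : a ∈ S) (hb : b ∈ S)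
    (ha₀ : (v a).2 = 0) (hb₀ : (v b).2 = 0) :
    θ b - θ a = ε * (horizontalSign (v a) - horizontalSign (v b)) / 4 := by
  rcases hε with rfl | rfl
  · simpa using sub_eq_of_isAngle_of_snd_nonneg hS hθ hv (by simpa using hhalf) ha hb ha₀ hb₀
  · have := sub_eq_of_isAngle_of_snd_nonneg (v := fun t => ((v t).1, -(v t).2))
      (θ := fun t => 1 / 2 - θ t) hS (continuousOn_const.sub hθ) (fun t ht => (hv t ht).reflect)
      (by simpa using hhalf) ha hb (by simp [ha₀]) (by simp [hb₀])
    simp only [horizontalSign] at this ⊢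
    linarith

namespace EssC1Curve

variable (c : EssC1Curve)

lemma differentiable : Differentiable ℝ c.Γ := c.smooth.differentiable one_ne_zero

lemma continuous_deriv : Continuous (deriv c.Γ) := c.smooth.continuous_deriv le_rfl

lemma deriv_add_one (t : ℝ) : deriv c.Γ (t + 1) = deriv c.Γ t := by
  rw [← deriv_comp_add_const, funext c.per, deriv_add_const]

lemma snd_add_one (t : ℝ) : (c.Γ (t + 1)).2 = (c.Γ t).2 := by simp [c.per]

def secant (p : ℝ × ℝ) : ℝ × ℝ := ∫ u in (0 : ℝ)..1, deriv c.Γ (p.1 + (p.2 - p.1) * u)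

lemma continuous_secant : Continuous c.secant :=
  have := c.continuous_deriv
  intervalIntegral.continuous_parametric_intervalIntegral_of_continuous' (by fun_prop) 0 1

lemma secant_self (t : ℝ) : c.secant (t, t) = deriv c.Γ t := by simp [secant]

lemma sub_smul_secant (s t : ℝ) : (t - s) • c.secant (s, t) = c.Γ t - c.Γ s := by
  rw [secant, intervalIntegral.smul_integral_comp_add_mul, mul_zero, mul_one, add_zero,
    add_sub_cancel, intervalIntegral.integral_deriv_eq_sub (fun x _ => c.differentiable x)
      (c.continuous_deriv.intervalIntegrable _ _)]

lemma sub_mul_secant_snd (s t : ℝ) :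
    (t - s) * (c.secant (s, t)).2 = (c.Γ t).2 - (c.Γ s).2 :=
  congrArg Prod.snd (c.sub_smul_secant s t)

lemma mul_secant_snd_nonneg {ε s t : ℝ} (hst : s < t) (h : ε * (c.Γ s).2 ≤ ε * (c.Γ t).2) :
    0 ≤ ε * (c.secant (s, t)).2 := by
  refine nonneg_of_mul_nonneg_right ?_ (sub_pos.2 hst)
  rw [mul_left_comm, c.sub_mul_secant_snd]
  linarith

lemma secant_snd_eq_zero {s t : ℝ} (hst : s < t) (h : (c.Γ s).2 = (c.Γ t).2) :
    (c.secant (s, t)).2 = 0 := by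
  have := c.sub_mul_secant_snd s t
  rw [h, sub_self] at this
  exact (mul_eq_zero.1 this).resolve_left (sub_ne_zero.2 hst.ne')

lemma secant_ne_zero {s t : ℝ} (hst : s ≤ t) (hts : t ≤ s + 1) : c.secant (s, t) ≠ 0 := by
  rcases hst.eq_or_lt with rfl | hlt
  · rw [secant_self]
    exact c.tangent_ne s
  intro h0
  have hΓ : c.Γ s = c.Γ t := by
    have := c.sub_smul_secant s t
    rwa [h0, smul_zero, eq_comm, sub_eq_zero, eq_comm] at this
  obtain ⟨k, rfl⟩ := c.inj s t hΓ
  obtain rfl : k = 1 := by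
    have h0k : (0 : ℝ) < k := by linarith
    have hk1 : (k : ℝ) ≤ 1 := by linarith
    norm_cast at h0k hk1
    omega
  have he : c.e = 0 := by simpa [c.per, eq_comm] using congrArg Prod.fst hΓ
  rcases c.he with h | h <;> norm_num [h] at he

lemma secant_add_one (t : ℝ) : c.secant (t, t + 1) = (c.e, 0) := by
  simpa [c.per] using c.sub_smul_secant t (t + 1)

lemma deriv_snd_eq_zero_of_forall_mul_le {ε x : ℝ} (hε : ε ≠ 0)
    (hext : ∀ t, ε * (c.Γ t).2 ≤ ε * (c.Γ x).2) :
    (deriv c.Γ x).2 = 0 := by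
  have hmax : IsLocalMax (fun t => ε * (c.Γ t).2) x := Filter.Eventually.of_forall hext
  have hsnd : HasDerivAt (fun t => (c.Γ t).2) (deriv c.Γ x).2 x :=
    (hasFDerivAt_snd (p := c.Γ x)).comp_hasDerivAt x (c.differentiable x).hasDerivAt
  have hderiv := hsnd.const_mul ε
  simpa [hε] using hderiv.deriv.symm.trans hmax.deriv_eq_zero

lemma exists_isAngle_secant_legs {a b : ℝ} (hab : a ≤ b) (hb : b ≤ a + 1) {θ : ℝ → ℝ}
    (hθ : IsAngleDet (deriv c.Γ) θ) :
    ∃ α β : ℝ → ℝ, Continuous α ∧ Continuous β ∧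
      (∀ t ∈ Icc a b, IsAngle (c.secant (a, t)) (α t)) ∧
      (∀ s ∈ Icc a b, IsAngle (c.secant (s, b)) (β s)) ∧
      θ b - θ a = (α b - α a) + (β b - β a) := by
  let P : ℝ → ℝ := fun x => projIcc a b hab x
  let G : ℝ × ℝ → ℝ × ℝ := fun p => c.secant (min (P p.1) (P p.2), P p.2)
  have hG₀ : ∀ p, G p ≠ 0 := fun p => c.secant_ne_zero (min_le_right _ _) <| by
    linarith [(projIcc a b hab p.2).2.2, le_min (projIcc a b hab p.1).2.1 (projIcc a b hab p.2).2.1]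
  -- `G` folds the square `[a, b]²` onto the triangle `s ≤ t`: its side `s = b` is the tangent
  -- `Γ'` and its side `t = a` is the constant `Γ' a`.
  obtain ⟨Ψ, hΨ, hΨG⟩ := exists_continuous_isAngle (c.continuous_secant.comp (by fun_prop)) hG₀
  have hGIcc : ∀ s ∈ Icc a b, ∀ t ∈ Icc a b, G (s, t) = c.secant (min s t, t) :=
    fun s hs t ht => by simp [G, P, projIcc_of_mem hab hs, projIcc_of_mem hab ht]
  have hΨ' : ∀ s ∈ Icc a b, ∀ t ∈ Icc a b, IsAngle (c.secant (min s t, t)) (Ψ (s, t)) :=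
    fun s hs t ht => hGIcc s hs t ht ▸ hΨG (s, t)
  have ha : a ∈ Icc a b := left_mem_Icc.2 hab
  have hb : b ∈ Icc a b := right_mem_Icc.2 hab
  refine ⟨fun t => Ψ (a, t), fun s => Ψ (s, b), by fun_prop, by fun_prop,
    fun t ht => by simpa [min_eq_left ht.1] using hΨ' a ha t ht,
    fun s hs => by simpa [min_eq_left hs.2] using hΨ' s hs b hb, ?_⟩
  have hdiag := sub_eq_sub_of_isAngle isPreconnected_Icc hθ.1.continuousOn
    (hΨ.comp (by fun_prop : Continuous fun t : ℝ => (b, t))).continuousOn (fun t _ => hθ.2 t)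
    (fun t ht => by simpa [min_eq_right ht.2, secant_self] using hΨ' b hb t ht) ha hb
  have hbottom := sub_eq_sub_of_isAngle isPreconnected_Icc continuousOn_const
    (hΨ.comp (by fun_prop : Continuous fun s : ℝ => (s, a))).continuousOn
    (fun _ _ => hΨ' a ha a ha) (fun s hs => by simpa [min_eq_right hs.1] using hΨ' s hs a ha)
    ha hb
  simp only [Function.comp_apply] at hdiag hbottom
  linarith

lemma sub_eq_of_extremal {θ : ℝ → ℝ} (hθ : IsAngleDet (deriv c.Γ) θ) {ε : ℝ}
    (hε : ε = 1 ∨ ε = -1) {a b : ℝ} (hab : a < b) (hb : b ≤ a + 1)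
    (hext : ∀ t, ε * (c.Γ t).2 ≤ ε * (c.Γ a).2) (hba : (c.Γ b).2 = (c.Γ a).2) :
    θ b - θ a = ε * (2 * horizontalSign (c.secant (a, b)) - horizontalSign (deriv c.Γ a)
      - horizontalSign (deriv c.Γ b)) / 4 := by
  obtain ⟨α, β, hα, hβ, hαv, hβv, hsum⟩ := c.exists_isAngle_secant_legs hab.le hb hθ
  have hε₀ : ε ≠ 0 := by rcases hε with rfl | rfl <;> norm_num
  have hhoriz_a : (deriv c.Γ a).2 = 0 := c.deriv_snd_eq_zero_of_forall_mul_le hε₀ hext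
  have hhoriz_b : (deriv c.Γ b).2 = 0 := c.deriv_snd_eq_zero_of_forall_mul_le hε₀ (hba ▸ hext)
  have hαhalf : ∀ t ∈ Icc a b, 0 ≤ -ε * (c.secant (a, t)).2 := fun t ht => by
    rcases ht.1.eq_or_lt with rfl | hlt
    · simp [secant_self, hhoriz_a]
    · exact c.mul_secant_snd_nonneg hlt (by linarith [hext t])
  have hβhalf : ∀ s ∈ Icc a b, 0 ≤ ε * (c.secant (s, b)).2 := fun s hs => by
    rcases hs.2.eq_or_lt with rfl | hlt
    · simp [secant_self, hhoriz_b]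
    · exact c.mul_secant_snd_nonneg hlt (hba ▸ hext s)
  have ha : a ∈ Icc a b := left_mem_Icc.2 hab.le
  have hb : b ∈ Icc a b := right_mem_Icc.2 hab.le
  have hsec : (c.secant (a, b)).2 = 0 := c.secant_snd_eq_zero hab hba.symm
  have hΔα := sub_eq_of_isAngle_of_halfPlane isPreconnected_Icc hα.continuousOn hαv
    (by rcases hε with rfl | rfl <;> norm_num) hαhalf ha hb
    (by rwa [secant_self]) hsec
  have hΔβ := sub_eq_of_isAngle_of_halfPlane isPreconnected_Icc hβ.continuousOn hβv hε hβhalf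
    ha hb hsec (by rwa [secant_self])
  rw [secant_self] at hΔα hΔβ
  linarith

lemma add_one_sub_eq_zero {θ : ℝ → ℝ} (hθ : IsAngleDet (deriv c.Γ) θ) (t : ℝ) :
    θ (t + 1) - θ t = 0 := by
  have hconst : ∀ s, θ (s + 1) - θ s = θ (t + 1) - θ t := fun s =>
    sub_eq_sub_of_isAngle isPreconnected_univ hθ.1.continuousOn
      (hθ.1.comp (continuous_add_const 1)).continuousOn (fun u _ => hθ.2 u)
      (fun u _ => c.deriv_add_one u ▸ hθ.2 (u + 1)) trivial trivial
  have hheight := Function.Periodic.compact_of_continuous (f := fun t => (c.Γ t).2)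
    c.snd_add_one one_ne_zero (continuous_snd.comp c.smooth.continuous)
  obtain ⟨_, ⟨S, rfl⟩, hS⟩ := hheight.exists_isGreatest (range_nonempty _)
  obtain ⟨_, ⟨ν, rfl⟩, hν⟩ := hheight.exists_isLeast (range_nonempty _)
  have hmax := c.sub_eq_of_extremal hθ (Or.inl rfl) (lt_add_one S) le_rfl
    (fun t => by simpa using hS ⟨t, rfl⟩) (c.snd_add_one S)
  have hmin := c.sub_eq_of_extremal hθ (Or.inr rfl) (lt_add_one ν) le_rfl
    (fun t => by simpa using hν ⟨t, rfl⟩) (c.snd_add_one ν)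
  rw [secant_add_one, deriv_add_one] at hmax hmin
  rcases horizontalSign_eq_one_or (c.e, 0) with hE | hE <;>
  rcases horizontalSign_eq_one_or (deriv c.Γ S) with hSd | hSd <;>
  rcases horizontalSign_eq_one_or (deriv c.Γ ν) with hνd | hνd <;>
  linarith [hconst S, hconst ν]

lemma horizontalSign_deriv_of_forall_le {a : ℝ} (ha : ∀ t, (c.Γ t).2 ≤ (c.Γ a).2) :
    horizontalSign (deriv c.Γ a) = horizontalSign (c.e, 0) := by
  obtain ⟨θ, hθc, hθ⟩ := exists_continuous_isAngle c.continuous_deriv c.tangent_ne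
  have := c.sub_eq_of_extremal ⟨hθc, hθ⟩ (Or.inl rfl) (lt_add_one a) le_rfl
    (fun t => by simpa using ha t) (c.snd_add_one a)
  rw [secant_add_one, deriv_add_one, c.add_one_sub_eq_zero ⟨hθc, hθ⟩] at this
  linarith

end EssC1Curve

/-- if two distinct parameters `S₀`, `S₁` (with `S₁` a lift in
`(S₀, S₀+1)`) both achieve the maximal height of a `C¹` essential curve, then
the angle variation of the tangent vector along the curve between them is
zero: `Var_γ(γ(s₀), γ(s₁)) = θ S₁ − θ S₀ = 0` for any continuous determination
`θ` of the tangent angle. -/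
theorem stmt5 (c : EssC1Curve) (S₀ S₁ : ℝ) (hS : S₁ ∈ Set.Ioo S₀ (S₀ + 1))
    (hmax₀ : ∀ t, (c.Γ t).2 ≤ (c.Γ S₀).2) (hmax₁ : (c.Γ S₁).2 = (c.Γ S₀).2)
    (θ : ℝ → ℝ) (hθ : IsAngleDet (fun t => deriv c.Γ t) θ) :
    θ S₁ - θ S₀ = 0 := by
  have hmax₁' : ∀ t, (c.Γ t).2 ≤ (c.Γ S₁).2 := hmax₁ ▸ hmax₀
  have h₀₁ := c.sub_eq_of_extremal hθ (Or.inl rfl) hS.1 hS.2.le (by simpa using hmax₀) hmax₁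
  have h₁₀ := c.sub_eq_of_extremal hθ (Or.inl rfl) hS.2 (by linarith [hS.1])
    (by simpa using hmax₁') (by rw [c.snd_add_one, hmax₁])
  have hwind := c.add_one_sub_eq_zero hθ S₀
  rw [c.deriv_add_one] at h₁₀
  have hσ₀ := c.horizontalSign_deriv_of_forall_le hmax₀
  have hσ₁ := c.horizontalSign_deriv_of_forall_le hmax₁'
  rcases horizontalSign_eq_one_or (c.secant (S₀, S₁)) with h | h <;>
  rcases horizontalSign_eq_one_or (c.secant (S₁, S₀ + 1)) with h' | h' <;>
  rcases horizontalSign_eq_one_or (c.e, 0) with hE | hE <;>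
  linarith
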